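/- Let G(x) = exp((1+λ²‖x‖²)^{1/2}) on a real Hilbert space H, λ > 0. Then for all x, v ∈ H, |exp(ψ_λ(x+v) − ψ_λ(x)) − 1 − ⟨∇ψ_λ(x), v⟩| ≤ (λ²/2) e^{λ‖v‖} ‖v‖², where ψ_λ(x) = (1+λ²‖x‖²)^{1/2}. -/

import Mathlib

open Real


lemma mono_aux' {w w' : ℝ → ℝ} (hw : ∀ t, HasDerivAt w (w' t) t)
    (h0 : ∀ t ∈ Set.Icc (0:ℝ) 1, 0 ≤ w' t) : w 0 ≤ w 1 := by
  have hmono : MonotoneOn w (Set.Icc (0:ℝ) 1) := by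
    apply monotoneOn_of_deriv_nonneg (convex_Icc 0 1)
    · exact fun t _ => (hw t).continuousAt.continuousWithinAt
    · exact fun t _ => ((hw t).differentiableAt).differentiableWithinAt
    · intro t ht
      rw [interior_Icc] at ht
      rw [(hw t).deriv]
      exact h0 t (Set.mem_Icc_of_Ioo ht)
  exact hmono (by norm_num) (by norm_num) zero_le_one

lemma taylor2_aux' {g g' g'' : ℝ → ℝ} {M : ℝ}
    (hg : ∀ t, HasDerivAt g (g' t) t)
    (hg' : ∀ t, HasDerivAt g' (g'' t) t)
    (hM : ∀ t ∈ Set.Icc (0:ℝ) 1, |g'' t| ≤ M) :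
    |g 1 - g 0 - g' 0| ≤ M / 2 := by
  have key : ∀ t ∈ Set.Icc (0:ℝ) 1, |g' t - g' 0| ≤ M * t := by
    intro t ht
    have := Convex.norm_image_sub_le_of_norm_hasDerivWithin_le
      (f := g') (f' := g'') (C := M) (s := Set.Icc 0 1)
      (fun u hu => (hg' u).hasDerivWithinAt)
      (fun u hu => by simpa [Real.norm_eq_abs] using hM u hu)
      (convex_Icc 0 1) (Set.left_mem_Icc.2 zero_le_one) ht
    simpa [Real.norm_eq_abs, abs_of_nonneg ht.1] using this
  have hsq : ∀ t : ℝ, HasDerivAt (fun u : ℝ => M * u^2/2) (M * t) t := by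
    intro t
    have h := (hasDerivAt_pow 2 t).const_mul (M/2)
    norm_num at h
    have hf : (fun u:ℝ => M*u^2/2) = (fun y:ℝ => M/2*y^2) := by funext u; ring
    rw [hf, show M*t = M/2*(2*t) by ring]
    exact h
  have hub : g 1 - g 0 - g' 0 ≤ M / 2 := by
    have h := mono_aux' (w := fun t => M * t^2/2 - (g t - g 0 - g' 0 * t))
      (w' := fun t => M * t - (g' t - g' 0))
      (fun t => ((hsq t).sub (((hg t).sub_const (g 0)).sub
        ((hasDerivAt_id t).const_mul (g' 0)))).congr_deriv (by ring))
      (fun t ht => by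
        have h1 := (abs_le.1 (key t ht)).2
        linarith)
    simp at h
    nlinarith [h]
  have hlb : -(M / 2) ≤ g 1 - g 0 - g' 0 := by
    have h := mono_aux' (w := fun t => M * t^2/2 + (g t - g 0 - g' 0 * t))
      (w' := fun t => M * t + (g' t - g' 0))
      (fun t => ((hsq t).add (((hg t).sub_const (g 0)).sub
        ((hasDerivAt_id t).const_mul (g' 0)))).congr_deriv (by ring))
      (fun t ht => by
        have h1 := (abs_le.1 (key t ht)).1
        linarith)
    simp at h
    nlinarith [h]
  rw [abs_le]; exact ⟨hlb, hub⟩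

set_option maxHeartbeats 1000000 in
/-- For ψ_λ(x) = (1+λ²‖x‖²)^{1/2} with gradient ∇ψ_λ(x) = λ²x/(1+λ²‖x‖²)^{1/2},
for all x, v:
|exp(ψ_λ(x+v) − ψ_λ(x)) − 1 − ⟨∇ψ_λ(x), v⟩| ≤ (λ²/2) e^{λ‖v‖} ‖v‖². -/
theorem exp_taylor_estimate_psi_lambda
    {H : Type*} [NormedAddCommGroup H] [InnerProductSpace ℝ H]
    (lam : ℝ) (hlam : 0 < lam) (x v : H) :
    |Real.exp (Real.sqrt (1 + lam ^ 2 * ‖x + v‖ ^ 2)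
          - Real.sqrt (1 + lam ^ 2 * ‖x‖ ^ 2))
        - 1 - inner ℝ ((lam ^ 2 / Real.sqrt (1 + lam ^ 2 * ‖x‖ ^ 2)) • x) v|
      ≤ lam ^ 2 / 2 * Real.exp (lam * ‖v‖) * ‖v‖ ^ 2 := by
  set a : ℝ := ‖x‖^2 with ha
  set b : ℝ := (inner ℝ x v : ℝ) with hb
  set c : ℝ := ‖v‖^2 with hc
  have hc0 : 0 ≤ c := by rw [hc]; positivity
  have ha0 : 0 ≤ a := by rw [ha]; positivity
  have hnorm : ∀ t : ℝ, ‖x + t • v‖^2 = a + 2*b*t + c*t^2 := by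
    intro t
    rw [ha, hb, hc, @norm_add_sq_real, real_inner_smul_right, norm_smul, mul_pow]
    simp [sq_abs]
    ring
  set s : ℝ → ℝ := fun t => 1 + lam^2 * (a + 2*b*t + c*t^2) with hs_def
  have hs1 : ∀ t, 1 ≤ s t := by
    intro t
    have h := hnorm t
    have h2 := sq_nonneg ‖x + t • v‖
    rw [h] at h2
    simp only [hs_def]
    nlinarith [sq_nonneg lam]
  set f : ℝ → ℝ := fun t => Real.sqrt (s t) with hf_def
  have hf1 : ∀ t, 1 ≤ f t := by
    intro t
    simp only [hf_def]
    rw [show (1:ℝ) = Real.sqrt 1 by rw [Real.sqrt_one]]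
    exact Real.sqrt_le_sqrt (hs1 t)
  have hfpos : ∀ t, 0 < f t := fun t => lt_of_lt_of_le one_pos (hf1 t)
  have hfsq : ∀ t, (f t)^2 = s t := by
    intro t
    simp only [hf_def]
    exact Real.sq_sqrt (le_trans zero_le_one (hs1 t))
  have hf' : ∀ t, HasDerivAt f (lam^2*(b + c*t)/ f t) t := by
    intro t
    have hq : HasDerivAt (fun u:ℝ => a + 2*b*u + c*u^2) (2*b + 2*c*t) t := by
      have hpow : HasDerivAt (fun u:ℝ => u^2) (2*t) t := by
        simpa using hasDerivAt_pow 2 t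
      exact ((((hasDerivAt_id t).const_mul (2*b)).const_add a).add
        (hpow.const_mul c)).congr_deriv (by ring)
    have hsd : HasDerivAt s (lam^2*(2*b + 2*c*t)) t := by
      simp only [hs_def]
      exact ((hq.const_mul (lam^2)).const_add 1).congr_deriv (by ring)
    have hne : s t ≠ 0 := by linarith [hs1 t]
    have h := hsd.sqrt hne
    have hsne : Real.sqrt (s t) ≠ 0 := ne_of_gt (by simpa [hf_def] using hfpos t)
    simp only [hf_def]
    exact h.congr_deriv (by field_simp)
  set d : ℝ → ℝ := fun t => lam^2*(b + c*t)/f t with hd_def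
  set g : ℝ → ℝ := fun t => Real.exp (f t - f 0) with hg_def
  have hg' : ∀ t, HasDerivAt g (g t * d t) t := by
    intro t
    simp only [hg_def, hd_def]
    exact ((hf' t).sub_const (f 0)).exp
  set D' : ℝ → ℝ := fun t => (lam^2*c * f t - lam^2*(b+c*t) * d t)/(f t)^2 with hD'_def
  have hd' : ∀ t, HasDerivAt d (D' t) t := by
    intro t
    have hnum : HasDerivAt (fun u:ℝ => lam^2*(b + c*u)) (lam^2*c) t := by
      exact ((((hasDerivAt_id t).const_mul c).const_add b).const_mul
        (lam^2)).congr_deriv (by ring)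
    have h := hnum.div (hf' t) (ne_of_gt (hfpos t))
    simp only [hd_def, hD'_def]
    exact h.congr_deriv (by ring)
  have hgd : ∀ t, HasDerivAt (fun u => g u * d u) (g t * d t * d t + g t * D' t) t := by
    intro t
    exact ((hg' t).mul (hd' t)).congr_deriv (by ring)
  set E : ℝ := Real.exp (lam * ‖v‖) with hE
  have hE1 : (1:ℝ) ≤ E := Real.one_le_exp (by positivity)
  -- Cauchy-Schwarz along the segment
  have hCS : ∀ t : ℝ, (b + c*t)^2 ≤ (a + 2*b*t + c*t^2)*c := by
    intro t
    have h1 := real_inner_mul_inner_self_le (x + t • v) v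
    rw [real_inner_self_eq_norm_sq, real_inner_self_eq_norm_sq] at h1
    have h2 : (inner ℝ (x + t • v) v : ℝ) = b + c*t := by
      rw [inner_add_left, real_inner_smul_left, real_inner_self_eq_norm_sq, hb, hc]
      ring
    rw [h2, hnorm t, ← hc] at h1
    rw [sq]
    exact h1
  have hbxv : b ≤ ‖x‖ * ‖v‖ := by rw [hb]; exact real_inner_le_norm x v
  have hBx : lam * ‖x‖ ≤ f 0 := by
    have hB2 : (f 0)^2 = 1 + lam^2 * a := by
      rw [hfsq 0]; simp only [hs_def]; ring
    have hB1 := hf1 0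
    by_contra hcon
    push_neg at hcon
    have h2 := mul_self_lt_mul_self (by linarith : (0:ℝ) ≤ f 0) hcon
    nlinarith [h2, hB2, ha]
  have hgle : ∀ t ∈ Set.Icc (0:ℝ) 1, g t ≤ E := by
    intro t ht
    have hA2 := hfsq t
    have hB2 : (f 0)^2 = 1 + lam^2 * a := by
      rw [hfsq 0]; simp only [hs_def]; ring
    have hA1 := hf1 t
    have hB1 := hf1 0
    have hfle : f t ≤ f 0 + lam * ‖v‖ := by
      have hsq : (f t)^2 ≤ (f 0 + lam * ‖v‖)^2 := by
        rw [hA2]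
        simp only [hs_def]
        have e1 : (f 0 + lam*‖v‖)^2 = 1 + lam^2*a + 2*(f 0)*(lam*‖v‖) + lam^2*‖v‖^2 := by
          linear_combination hB2
        rw [e1]
        have step1 : lam^2*(b*t) ≤ f 0 * (lam*‖v‖) := by
          nlinarith [mul_le_mul_of_nonneg_right hbxv (mul_nonneg (sq_nonneg lam) ht.1),
            mul_le_mul_of_nonneg_right hBx
              (mul_nonneg (mul_nonneg hlam.le (norm_nonneg v)) ht.1),
            mul_le_mul_of_nonneg_left ht.2
              (mul_nonneg (mul_nonneg hlam.le (norm_nonneg v)) (by linarith : (0:ℝ) ≤ f 0))]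
        have step2 : c*t^2 ≤ c := by
          nlinarith [mul_nonneg (mul_nonneg hc0 (by linarith [ht.2] : (0:ℝ) ≤ 1 - t))
            (by linarith [ht.1] : (0:ℝ) ≤ 1 + t)]
        have hcv : c = ‖v‖^2 := hc
        nlinarith [step1, step2, sq_nonneg lam,
          mul_le_mul_of_nonneg_left step2 (sq_nonneg lam)]
      nlinarith [hsq, hA1, hB1, mul_nonneg hlam.le (norm_nonneg v)]
    simp only [hg_def, hE]
    exact Real.exp_le_exp.2 (by linarith)
  have hgpos : ∀ t, 0 < g t := fun t => Real.exp_pos _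
  have hM : ∀ t ∈ Set.Icc (0:ℝ) 1, |g t * d t * d t + g t * D' t| ≤ lam^2 * E * c := by
    intro t ht
    have hF1 := hf1 t
    have hFpos := hfpos t
    have hFsq := hfsq t
    have hP := hCS t
    have hq0 : 0 ≤ a + 2*b*t + c*t^2 := by
      have := sq_nonneg ‖x + t • v‖; rwa [hnorm t] at this
    have hP2 : lam^4*(b + c*t)^2 ≤ lam^2*c*((f t)^2 - 1) := by
      rw [hFsq]
      simp only [hs_def]
      nlinarith [mul_le_mul_of_nonneg_left hP (pow_nonneg hlam.le 4)]
    have hbr : d t^2 + D' t = (lam^4*(b+c*t)^2*(f t) + lam^2*c*(f t)^2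
        - lam^4*(b+c*t)^2)/(f t)^3 := by
      simp only [hd_def, hD'_def]
      field_simp
      ring
    have hS : lam^4*(b+c*t)^2 ≤ lam^2*c*(f t)^2 := by
      nlinarith [hP2, mul_nonneg (mul_nonneg (sq_nonneg lam) hc0) (sq_nonneg (f t))]
    have hbr_le : d t^2 + D' t ≤ lam^2 * c := by
      rw [hbr, div_le_iff₀ (pow_pos hFpos 3)]
      nlinarith [mul_le_mul_of_nonneg_right hS (by linarith : (0:ℝ) ≤ f t - 1)]
    have hbr_nn : 0 ≤ d t^2 + D' t := by
      rw [hbr]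
      apply div_nonneg _ (le_of_lt (pow_pos hFpos 3))
      nlinarith [mul_nonneg (by positivity : (0:ℝ) ≤ lam^4*(b+c*t)^2)
          (by linarith : (0:ℝ) ≤ f t - 1),
        mul_nonneg (mul_nonneg (sq_nonneg lam) hc0) (sq_nonneg (f t))]
    have hgg : g t * d t * d t + g t * D' t = g t * (d t^2 + D' t) := by ring
    rw [hgg, abs_of_nonneg (mul_nonneg (hgpos t).le hbr_nn)]
    calc g t * (d t^2 + D' t) ≤ E * (lam^2 * c) :=
          mul_le_mul (hgle t ht) hbr_le hbr_nn (by positivity)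
      _ = lam^2 * E * c := by ring
  have main := taylor2_aux' hg' hgd hM
  -- rewrite the goal in terms of g, d
  have hg1 : g 1 = Real.exp (Real.sqrt (1 + lam ^ 2 * ‖x + v‖ ^ 2)
      - Real.sqrt (1 + lam ^ 2 * a)) := by
    have h1 : ‖x + v‖^2 = a + 2*b*1 + c*1^2 := by
      have := hnorm 1; simpa using this
    have hs0 : s 0 = 1 + lam^2 * a := by simp only [hs_def]; ring
    have hs1' : s 1 = 1 + lam^2 * ‖x + v‖^2 := by simp only [hs_def]; rw [h1]
    simp only [hg_def, hf_def, hs0, hs1']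
  have hg0 : g 0 = 1 := by simp only [hg_def]; simp
  have hgd0 : g 0 * d 0 = (inner ℝ ((lam ^ 2 / Real.sqrt (1 + lam ^ 2 * a)) • x) v : ℝ) := by
    rw [hg0, one_mul]
    have hs0 : s 0 = 1 + lam^2 * a := by simp only [hs_def]; ring
    simp only [hd_def, hf_def, hs0]
    rw [real_inner_smul_left, ← hb]
    ring
  rw [hg1, hgd0, hg0] at main
  rw [show lam ^ 2 / 2 * Real.exp (lam * ‖v‖) * ‖v‖ ^ 2 = (lam^2 * E * c)/2 by
    rw [hE, hc]; ring]
  exact main
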